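/- Let G be a finite group and H ≤ G a subgroup with p ∤ |H| and p ∣ |G|. If G acts 2-transitively on the coset space G/H (i.e. G acts transitively on ordered pairs of distinct cosets), then G has property (I_p) with respect to H. -/

import Mathlib

/-!
By 2-transitivity, `G` has exactly two orbits on `X × X` for `X = G/H` (the diagonal and its
complement), so every `k[G]`-endomorphism of `k[X]` is `a • 1 + b • J`, where `J v = ε(v) • 𝟙`
with `ε` the augmentation and `𝟙` the all-ones vector. Since `p ∣ |G|` and `p ∤ |H|`, `p` divides
`|X| = ε(𝟙)`, so `ε ∘ J = 0` and `J² = 0`. Applying `ε` to `e² = e` for `e = a • 1 + b • J` gives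
`a² = a`, and then `J² = 0` forces `b • J = 0`: the only idempotents are `0` and `1`.
-/

/-- A module is indecomposable if it is nonzero and admits no nontrivial direct sum
decomposition. -/
def IsIndecomposableModule (R M : Type*) [Ring R] [AddCommMonoid M] [Module R M] : Prop :=
  Nontrivial M ∧ ∀ N N' : Submodule R M, IsCompl N N' → N = ⊥ ∨ N' = ⊥

/-- The permutation module `k[G/H]`, as a module over the group algebra `k[G]`. -/
abbrev PermMod (k : Type*) [Field k] {G : Type*} [Group G] (H : Subgroup G) :=
  (Representation.ofMulAction k G (G ⧸ H)).asModule

/-- A finite group `G` has property `(I_p)` with respect to a subgroup `H` if `H` is a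
`p'`-subgroup and the permutation module `k[G/H]` is indecomposable (equivalently, it is the
projective cover of the trivial `k[G]`-module). -/
def HasIp (k : Type*) [Field k] {G : Type*} [Group G] (p : ℕ) (H : Subgroup G) : Prop :=
  ¬ (p ∣ Nat.card H) ∧ IsIndecomposableModule (MonoidAlgebra k G) (PermMod k H)

open scoped MonoidAlgebra
open MonoidAlgebra Representation

theorem isIndecomposableModule_of_forall_isIdempotentElem {R M : Type*} [Ring R]
    [AddCommGroup M] [Module R M] [Nontrivial M]
    (h : ∀ e : Module.End R M, IsIdempotentElem e → e = 0 ∨ e = 1) :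
    IsIndecomposableModule R M := by
  refine ⟨‹_›, fun N N' hc => ?_⟩
  refine (h _ (N.isIdempotentElem_projection hc)).imp (fun h0 => ?_) (fun h1 => ?_)
  · rw [← N.range_projection hc, h0, LinearMap.range_zero]
  · rw [← N.ker_projection hc, h1, Module.End.one_eq_id, LinearMap.ker_id]

theorem Representation.isIndecomposableModule_asModule {k G V : Type*} [CommRing k] [Monoid G]
    [AddCommGroup V] [Module k V] [Nontrivial V] (ρ : Representation k G V)
    (h : ∀ f : Module.End k V, (∀ g, f ∘ₗ ρ g = ρ g ∘ₗ f) → IsIdempotentElem f → f = 0 ∨ f = 1) :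
    IsIndecomposableModule k[G] ρ.asModule := by
  have : Nontrivial ρ.asModule := ρ.asModuleEquiv.toEquiv.nontrivial
  refine isIndecomposableModule_of_forall_isIdempotentElem fun e he => ?_
  let f : Module.End k V := ρ.asModuleEquiv.conj (e.restrictScalars k)
  have hf (g : G) : f ∘ₗ ρ g = ρ g ∘ₗ f := by
    ext v
    change ρ.asModuleEquiv (e (ρ.asModuleEquiv.symm (ρ g v))) = ρ g (ρ.asModuleEquiv (e _))
    rw [asModuleEquiv_symm_map_rho, e.map_smul, asModuleEquiv_map_smul, asAlgebraHom_of]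
    rfl
  have hfe : IsIdempotentElem f :=
    LinearMap.ext fun v => congr(ρ.asModuleEquiv ($(he.eq) (ρ.asModuleEquiv.symm v)))
  refine (h f hf hfe).imp (fun h0 => ?_) (fun h1 => ?_)
  · ext v; exact congr(ρ.asModuleEquiv.symm ($h0 (ρ.asModuleEquiv v)))
  · ext v; exact congr(ρ.asModuleEquiv.symm ($h1 (ρ.asModuleEquiv v)))

theorem eq_zero_or_eq_one_of_isIdempotentElem_smul_one_add_smul_smulRight {k V : Type*}
    [Field k] [AddCommGroup V] [Module k V] {ε : V →ₗ[k] k} {s : V} (hε : ε ≠ 0)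
    (hs : ε s = 0) {a b : k} (h : IsIdempotentElem (a • 1 + b • ε.smulRight s)) :
    a • 1 + b • ε.smulRight s = 0 ∨ a • 1 + b • ε.smulRight s = 1 := by
  set J := ε.smulRight s
  have hJJ : J * J = 0 := by ext v; simp [J, hs]
  have hεJ : ε ∘ₗ J = 0 := by ext v; simp [J, hs]
  have hεe : ε ∘ₗ (a • 1 + b • J) = a • ε := by
    rw [LinearMap.comp_add, LinearMap.comp_smul, LinearMap.comp_smul, hεJ, smul_zero, add_zero]
    rfl
  have ha : IsIdempotentElem a := by
    apply smul_left_injective k hε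
    have := congrArg (ε ∘ₗ ·) h.eq
    simp only [Module.End.mul_eq_comp, ← LinearMap.comp_assoc, hεe, LinearMap.smul_comp] at this
    simpa only [mul_smul] using this
  have hsq : (a • 1 + b • J) * (a • 1 + b • J) = (a * a) • 1 + (2 * a * b) • J := by
    simp only [mul_add, add_mul, smul_mul_smul, one_mul, mul_one, hJJ, smul_zero]
    module
  rcases IsIdempotentElem.iff_eq_zero_or_one.mp ha with rfl | rfl
  · left
    rw [← h.eq, hsq]
    simp
  · right
    have hb : b • J = 0 := by
      rw [one_mul, mul_one] at hsq
      have h2b := add_left_cancel (hsq.symm.trans h.eq)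
      rwa [two_mul, add_smul, add_eq_right] at h2b
    rw [hb, one_smul, add_zero]

section AllOnes

variable (k X : Type*) [CommSemiring k]

noncomputable def augmentation : k[X] →ₗ[k] k :=
  Finsupp.linearCombination k (fun _ => 1) ∘ₗ (coeffLinearEquiv k).toLinearMap

noncomputable def allOnes [Finite X] : k[X] := ofCoeff (Finsupp.equivFunOnFinite.symm 1)

noncomputable def allOnesEnd [Finite X] : Module.End k k[X] :=
  (augmentation k X).smulRight (allOnes k X)

variable {k X}

@[simp]
lemma augmentation_single (x : X) (c : k) : augmentation k X (single x c) = c := by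
  simp [augmentation]

lemma augmentation_ne_zero [Nonempty X] [Nontrivial k] : augmentation k X ≠ 0 := fun h => by
  simpa using congr($h (single (Classical.arbitrary X) 1))

@[simp]
lemma coeff_allOnes [Finite X] (x : X) : (allOnes k X).coeff x = 1 := rfl

lemma augmentation_allOnes [Finite X] : augmentation k X (allOnes k X) = Nat.card X := by
  have := Fintype.ofFinite X
  simp [augmentation, allOnes, Finsupp.linearCombination_apply, Finsupp.sum_fintype,
    Nat.card_eq_fintype_card]

end AllOnes

theorem exists_eq_smul_one_add_smul_allOnesEnd {k G X : Type*} [CommRing k] [Group G]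
    [MulAction G X] [Finite X] [Nontrivial X]
    (h2 : ∀ a b c d : X, a ≠ b → c ≠ d → ∃ g : G, g • a = c ∧ g • b = d)
    (f : Module.End k k[X]) (hf : ∀ g : G, f ∘ₗ ofMulAction k G X g = ofMulAction k G X g ∘ₗ f) :
    ∃ a b : k, f = a • 1 + b • allOnesEnd k X := by
  set m : X → X → k := fun x y => (f (single y 1)).coeff x
  have hm (g : G) (x y : X) : m (g • x) (g • y) = m x y := by
    simp only [m]
    rw [← ofMulAction_single (k := k), ← LinearMap.comp_apply, hf, LinearMap.comp_apply,
      coeff_ofMulAction, inv_smul_smul]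
  obtain ⟨x₀, y₀, hne⟩ := exists_pair_ne X
  have hdiag (x : X) : m x x = m x₀ x₀ := by
    obtain ⟨x', hx'⟩ := exists_ne x₀
    obtain ⟨y', hy'⟩ := exists_ne x
    obtain ⟨g, hg, -⟩ := h2 x₀ x' x y' hx'.symm hy'.symm
    rw [← hg, hm]
  have hoff (x y : X) (hxy : x ≠ y) : m x y = m y₀ x₀ := by
    obtain ⟨g, hgx, hgy⟩ := h2 y₀ x₀ x y hne.symm hxy
    rw [← hgx, ← hgy, hm]
  refine ⟨m x₀ x₀ - m y₀ x₀, m y₀ x₀, ?_⟩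
  ext y x
  obtain rfl | hxy := eq_or_ne x y
  · simpa [allOnesEnd] using hdiag x
  · simpa [allOnesEnd, hxy.symm] using hoff x y hxy

theorem stmt1_general (k : Type) [Field k] (p : ℕ) [Fact p.Prime] [CharP k p]
    (G : Type) [Group G] [Finite G] (H : Subgroup G)
    (hH : ¬ p ∣ Nat.card H) (hG : p ∣ Nat.card G)
    (h2 : ∀ a b c d : G ⧸ H, a ≠ b → c ≠ d → ∃ g : G, g • a = c ∧ g • b = d) :
    HasIp k p H := by
  have hp : p.Prime := Fact.out
  have hX : p ∣ Nat.card (G ⧸ H) := by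
    rw [H.card_eq_card_quotient_mul_card_subgroup] at hG
    exact (hp.dvd_mul.mp hG).resolve_right hH
  have : Nontrivial (G ⧸ H) := Finite.one_lt_card_iff_nontrivial.mp
    (hp.one_lt.trans_le (Nat.le_of_dvd Nat.card_pos hX))
  refine ⟨hH, (ofMulAction k G (G ⧸ H)).isIndecomposableModule_asModule fun f hf he => ?_⟩
  obtain ⟨a, b, rfl⟩ := exists_eq_smul_one_add_smul_allOnesEnd h2 f hf
  refine eq_zero_or_eq_one_of_isIdempotentElem_smul_one_add_smul_smulRight
    augmentation_ne_zero ?_ he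
  rw [augmentation_allOnes, CharP.cast_eq_zero_iff k p]
  exact hX

/-- If `p ∤ |H|`, `p ∣ |G|` and `G` acts 2-transitively on `G/H`, then `G` has property
`(I_p)` with respect to `H`. -/
theorem stmt1 (k : Type) [Field k] (p : ℕ) [Fact p.Prime] [IsAlgClosed k] [CharP k p]
    (G : Type) [Group G] [Finite G] (H : Subgroup G)
    (hH : ¬ p ∣ Nat.card H) (hG : p ∣ Nat.card G)
    (h2 : ∀ a b c d : G ⧸ H, a ≠ b → c ≠ d → ∃ g : G, g • a = c ∧ g • b = d) :
    HasIp k p H :=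
  stmt1_general k p G H hH hG h2
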